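/- For all integers δ, a ≥ 1, every integer m ≥ 0 and every divisor d of δ: (1) d_{1/(δ/d)}(σ^d_m(a)) = σ^δ_m(a) · T_{δ/d}; (2) σ^δ_m(a) · T_{δ/gcd(a,δ)} = σ^δ_m(a); (3) σ^δ_m(a) = d_{1/(δ/gcd(δ,a))}(σ^{gcd(δ,a)}_m(a)). -/

import Mathlib

/-!
`T_n` is the uniform average of the `n`-torsion subgroup `G[n] ≅ (ℤ/n)^r`. Two facts drive
everything. First, `d_{1/e} T_n = T_{en}`: the `e`-th roots of the points of `G[n]` are pairwise
disjoint cosets of `G[e]` filling up `G[en]`. Second, `T_m T_n = T_{lcm(m,n)}`: by Bézout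
`G[m] + G[n] = G[lcm(m,n)]`, and the addition map `G[m] × G[n] → G[lcm(m,n)]` is a
homomorphism, so all its fibres have the same size. The identities then hold term by term in the
divisor sums, using `lcm(δ/x, δ/y) = δ/gcd(x,y)` for `x, y ∣ δ`; (3) is (1) for `d = gcd(δ,a)`
followed by (2).
-/

noncomputable section

/-- `G = (ℝ/ℤ)^r`. -/
abbrev Gr (r : ℕ) : Type := Fin r → AddCircle (1 : ℝ)

/-- The group algebra `𝒢 = ℚ[G]`. -/
abbrev GA (r : ℕ) : Type := AddMonoidAlgebra ℚ (Gr r)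

/-- The division operator `d_{1/d}`, the ℚ-linear operator determined by
`d_{1/d}((θ)) = d^{-r} • ∑_{τ : d • τ = θ} (τ)`. -/
noncomputable def divOp (r d : ℕ) : GA r →ₗ[ℚ] GA r :=
  (Finsupp.lsum ℚ fun θ : Gr r =>
    LinearMap.toSpanSingleton ℚ (GA r)
      (AddMonoidAlgebra.ofCoeff
        (((d : ℚ) ^ r)⁻¹ • ∑ᶠ τ ∈ {τ : Gr r | d • τ = θ}, Finsupp.single τ (1 : ℚ)))) ∘ₗ
    (AddMonoidAlgebra.coeffLinearEquiv ℚ).toLinearMap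

/-- `T_n := d_{1/n}((0))`, the average of the `n`-torsion elements of `G`. -/
noncomputable def Tor (r n : ℕ) : GA r := divOp r n (AddMonoidAlgebra.ofCoeff (Finsupp.single 0 1))

/-- The refined divisor-sum `σ^δ_m(a) := ∑_{k ∣ a} (a/k)^m • T_{δ/gcd(δ,k)}`. -/
noncomputable def sigmaRef (r δ m a : ℕ) : GA r :=
  ∑ k ∈ a.divisors, ((a / k : ℕ) : ℚ) ^ m • Tor r (δ / Nat.gcd δ k)

open AddMonoidAlgebra Finset

theorem Nat.div_ne_zero_of_dvd {a b : ℕ} (ha : a ≠ 0) (hb : b ∣ a) : a / b ≠ 0 :=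
  (Nat.div_ne_zero_iff_of_dvd hb).2 ⟨ha, ne_zero_of_dvd_ne_zero ha hb⟩

theorem Nat.lcm_div_div {δ x y : ℕ} (hδ : δ ≠ 0) (hx : x ∣ δ) (hy : y ∣ δ) :
    Nat.lcm (δ / x) (δ / y) = δ / Nat.gcd x y := by
  have hx0 : x ≠ 0 := ne_zero_of_dvd_ne_zero hδ hx
  have hy0 : y ≠ 0 := ne_zero_of_dvd_ne_zero hδ hy
  have hgδ : Nat.gcd x y ∣ δ := (Nat.gcd_dvd_left x y).trans hx
  refine Nat.eq_of_factorization_eq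
    (Nat.lcm_ne_zero (Nat.div_ne_zero_of_dvd hδ hx) (Nat.div_ne_zero_of_dvd hδ hy))
    (Nat.div_ne_zero_of_dvd hδ hgδ) fun p => ?_
  have hxδ := (Nat.factorization_le_iff_dvd hx0 hδ).2 hx p
  have hyδ := (Nat.factorization_le_iff_dvd hy0 hδ).2 hy p
  rw [Nat.factorization_lcm (Nat.div_ne_zero_of_dvd hδ hx) (Nat.div_ne_zero_of_dvd hδ hy),
    Nat.factorization_div hx, Nat.factorization_div hy, Nat.factorization_div hgδ,
    Nat.factorization_gcd hx0 hy0]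
  simp only [Finsupp.sup_apply, Finsupp.tsub_apply, Finsupp.inf_apply]
  omega

theorem nsmul_lcm_eq_zero_iff {G : Type*} [AddCommGroup G] {m n : ℕ} {x : G} :
    Nat.lcm m n • x = 0 ↔ ∃ y z : G, m • y = 0 ∧ n • z = 0 ∧ y + z = x := by
  constructor
  · intro hx
    rcases Nat.eq_zero_or_pos (Nat.gcd m n) with hg | hg
    · exact ⟨x, 0, by simp [(Nat.gcd_eq_zero_iff.1 hg).1], nsmul_zero n, add_zero x⟩
    obtain ⟨u, v, huv⟩ := Nat.isCoprime_iff_coprime.2 (Nat.coprime_div_gcd_div_gcd hg)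
    have hm : ((m : ℤ) * (n / Nat.gcd m n : ℕ)) = (Nat.lcm m n : ℕ) := by
      rw [Nat.lcm, Nat.mul_div_assoc m (Nat.gcd_dvd_right m n)]; push_cast; ring
    have hn : ((n : ℤ) * (m / Nat.gcd m n : ℕ)) = (Nat.lcm m n : ℕ) := by
      rw [Nat.lcm_comm, Nat.lcm, Nat.gcd_comm, Nat.mul_div_assoc n (Nat.gcd_dvd_right n m)]
      push_cast; ring
    refine ⟨(v * (n / Nat.gcd m n : ℕ)) • x, (u * (m / Nat.gcd m n : ℕ)) • x, ?_, ?_, ?_⟩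
    · rw [← natCast_zsmul, smul_smul, mul_left_comm, hm, mul_smul, natCast_zsmul, hx, smul_zero]
    · rw [← natCast_zsmul, smul_smul, mul_left_comm, hn, mul_smul, natCast_zsmul, hx, smul_zero]
    · rw [← add_smul, add_comm, huv, one_smul]
  · rintro ⟨y, z, hy, hz, rfl⟩
    have hdvd {k : ℕ} {w : G} (hk : k ∣ Nat.lcm m n) (hw : k • w = 0) : Nat.lcm m n • w = 0 :=
      addOrderOf_dvd_iff_nsmul_eq_zero.1 ((addOrderOf_dvd_of_nsmul_eq_zero hw).trans hk)
    rw [smul_add, hdvd (Nat.dvd_lcm_left m n) hy, hdvd (Nat.dvd_lcm_right m n) hz, add_zero]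

section UniformAverage

variable (k : Type*) {G : Type*} [Field k] [AddCommGroup G] [DecidableEq G]

def uniformAvg (s : Finset G) : AddMonoidAlgebra k G :=
  (#s : k)⁻¹ • ∑ x ∈ s, single x 1

theorem AddMonoidHom.sum_comp_eq_nsmul_sum_image {A M : Type*} [AddGroup A] [Fintype A]
    [AddCommMonoid M] (φ : A →+ G) (f : G → M) :
    ∑ a, f (φ a) = #{a | φ a = 0} • ∑ x ∈ univ.image φ, f x := by
  rw [Finset.sum_comp, Finset.smul_sum]
  refine Finset.sum_congr rfl fun x hx => ?_
  rw [AddMonoidHom.card_fiber_eq_of_mem_range φ (by simpa using hx) ⟨0, map_zero φ⟩]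

variable [CharZero k]

theorem uniformAvg_image {A : Type*} [AddGroup A] [Fintype A] (φ : A →+ G) :
    uniformAvg k (univ.image φ) = (Fintype.card A : k)⁻¹ • ∑ a, single (φ a) 1 := by
  have hcard : Fintype.card A = #{a | φ a = 0} * #(univ.image φ) := by
    simpa using φ.sum_comp_eq_nsmul_sum_image (fun _ => (1 : ℕ))
  have hker : (#{a | φ a = 0} : k) ≠ 0 := Nat.cast_ne_zero.2 (card_ne_zero.2 ⟨0, by simp⟩)
  rw [uniformAvg, φ.sum_comp_eq_nsmul_sum_image (fun x => single x (1 : k)), hcard,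
    ← Nat.cast_smul_eq_nsmul k, smul_smul, Nat.cast_mul, mul_inv, mul_comm, ← mul_assoc,
    mul_inv_cancel₀ hker, one_mul]

theorem uniformAvg_image_mul {A B : Type*} [AddGroup A] [Fintype A] [AddGroup B] [Fintype B]
    (φ : A →+ G) (ψ : B →+ G) :
    uniformAvg k (univ.image φ) * uniformAvg k (univ.image ψ) =
      uniformAvg k (univ.image (φ.coprod ψ)) := by
  rw [uniformAvg_image, uniformAvg_image, uniformAvg_image, smul_mul_smul_comm, sum_mul_sum,
    Fintype.card_prod, Nat.cast_mul, mul_inv, Fintype.sum_prod_type]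
  simp only [single_mul_single, mul_one, AddMonoidHom.coprod_apply]

end UniformAverage

theorem ZMod.range_toAddCircle (N : ℕ) [NeZero N] :
    Set.range (ZMod.toAddCircle : ZMod N → UnitAddCircle) = {u | N • u = 0} := by
  ext u
  constructor
  · rintro ⟨j, rfl⟩
    rw [Set.mem_ofPred_eq, ← map_nsmul, nsmul_eq_mul, ZMod.natCast_self, zero_mul, map_zero]
  · intro hu
    obtain ⟨m, -, rfl⟩ := (AddCircle.nsmul_eq_zero_iff (NeZero.pos N)).1 hu
    exact ⟨m, by rw [ZMod.toAddCircle_natCast, mul_one]⟩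

section Torsion

variable (r : ℕ)

def torsionEmb (n : ℕ) [NeZero n] : (Fin r → ZMod n) →+ Gr r :=
  ZMod.toAddCircle.compLeft (Fin r)

variable {r} (n : ℕ) [NeZero n]

theorem torsionEmb_injective : Function.Injective (torsionEmb r n) :=
  (ZMod.toAddCircle_injective n).comp_left

theorem range_torsionEmb : Set.range (torsionEmb r n) = {τ | n • τ = 0} := by
  ext τ
  constructor
  · rintro ⟨j, rfl⟩
    funext i
    exact (ZMod.range_toAddCircle n).subset ⟨j i, rfl⟩
  · intro h
    have hτ (i : Fin r) : τ i ∈ Set.range (ZMod.toAddCircle : ZMod n → _) := by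
      rw [ZMod.range_toAddCircle]
      exact congrFun h i
    choose j hj using hτ
    exact ⟨j, funext hj⟩

theorem mem_range_torsionEmb {τ : Gr r} : τ ∈ Set.range (torsionEmb r n) ↔ n • τ = 0 :=
  Set.ext_iff.1 (range_torsionEmb n) τ

end Torsion

section Tor

variable {r : ℕ}

theorem divOp_single (d : ℕ) (θ : Gr r) :
    divOp r d (single θ 1) =
      ((d : ℚ) ^ r)⁻¹ • ∑ᶠ τ ∈ {τ : Gr r | d • τ = θ}, single τ (1 : ℚ) := by
  rw [divOp, LinearMap.comp_apply, LinearEquiv.coe_coe, coeffLinearEquiv_apply, coeff_single, Finsupp.lsum_single,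
    LinearMap.toSpanSingleton_apply, one_smul, ofCoeff_smul]
  congr 1
  simp only [← ofCoeff_single]
  change (coeffAddEquiv.symm : (Gr r →₀ ℚ) ≃+ GA r) _ = _
  simp only [AddEquivClass.map_finsum]
  rfl

theorem Tor_eq_finsum (n : ℕ) :
    Tor r n = ((n : ℚ) ^ r)⁻¹ • ∑ᶠ τ ∈ {τ : Gr r | n • τ = 0}, single τ (1 : ℚ) :=
  divOp_single n 0

theorem finsum_torsion_eq_sum {M : Type*} [AddCommMonoid M] (n : ℕ) [NeZero n]
    (f : Gr r → M) :
    ∑ᶠ τ ∈ {τ : Gr r | n • τ = 0}, f τ = ∑ j, f (torsionEmb r n j) := by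
  rw [← range_torsionEmb, finsum_mem_range (torsionEmb_injective n), finsum_eq_sum_of_fintype]

theorem Tor_eq_uniformAvg (n : ℕ) [NeZero n] :
    Tor r n = uniformAvg ℚ (univ.image (torsionEmb r n)) := by
  rw [Tor_eq_finsum, finsum_torsion_eq_sum, uniformAvg_image, Fintype.card_fun, ZMod.card,
    Fintype.card_fin, Nat.cast_pow]

theorem Tor_mul_Tor {m n : ℕ} (hm : m ≠ 0) (hn : n ≠ 0) :
    Tor r m * Tor r n = Tor r (Nat.lcm m n) := by
  have := NeZero.mk hm
  have := NeZero.mk hn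
  have := NeZero.mk (Nat.lcm_ne_zero hm hn)
  rw [Tor_eq_uniformAvg, Tor_eq_uniformAvg, Tor_eq_uniformAvg, uniformAvg_image_mul]
  congr 1
  apply Finset.coe_injective
  ext τ
  simp only [coe_image, coe_univ, Set.image_univ]
  rw [mem_range_torsionEmb, nsmul_lcm_eq_zero_iff]
  simp only [← mem_range_torsionEmb]
  constructor
  · rintro ⟨⟨j, j'⟩, rfl⟩
    exact ⟨_, _, ⟨j, rfl⟩, ⟨j', rfl⟩, rfl⟩
  · rintro ⟨_, _, ⟨j, rfl⟩, ⟨j', rfl⟩, rfl⟩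
    exact ⟨(j, j'), rfl⟩

theorem divOp_Tor {e n : ℕ} (he : e ≠ 0) (hn : n ≠ 0) :
    divOp r e (Tor r n) = Tor r (e * n) := by
  have := NeZero.mk he
  have := NeZero.mk hn
  have hfibers : {τ : Gr r | (e * n) • τ = 0} = ⋃ j, {τ | e • τ = torsionEmb r n j} := by
    ext τ
    rw [Set.mem_iUnion, Set.mem_ofPred_eq, mul_nsmul, ← mem_range_torsionEmb]
    simp only [Set.mem_range, Set.mem_ofPred_eq, eq_comm]
  have hdisj : Pairwise fun i j =>
      Disjoint {τ : Gr r | e • τ = torsionEmb r n i} {τ : Gr r | e • τ = torsionEmb r n j} :=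
    fun i j hij => Set.disjoint_left.2 fun τ hi hj =>
      hij (torsionEmb_injective n (hi.symm.trans hj))
  have hfin (j) : {τ : Gr r | e • τ = torsionEmb r n j}.Finite := by
    refine (Set.finite_range (torsionEmb r (e * n))).subset ?_
    rw [range_torsionEmb, hfibers]
    exact Set.subset_iUnion (fun j => {τ : Gr r | e • τ = torsionEmb r n j}) j
  rw [Tor_eq_finsum n, finsum_torsion_eq_sum, map_smul, map_sum]
  simp only [divOp_single]
  rw [← Finset.smul_sum, smul_smul, ← finsum_eq_sum_of_fintype, ← finsum_mem_iUnion hdisj hfin,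
    ← hfibers, Tor_eq_finsum]
  congr 1
  push_cast
  rw [mul_pow, mul_inv, mul_comm]

end Tor

section SigmaRef

variable {r δ : ℕ}

theorem divOp_sigmaRef (m a : ℕ) {d : ℕ} (hδ : δ ≠ 0) (hd : d ∣ δ) :
    divOp r (δ / d) (sigmaRef r d m a) = sigmaRef r δ m a * Tor r (δ / d) := by
  have hd0 : d ≠ 0 := ne_zero_of_dvd_ne_zero hδ hd
  rw [sigmaRef, sigmaRef, map_sum, sum_mul]
  refine sum_congr rfl fun k _ => ?_
  have hgδ := Nat.gcd_dvd_left δ k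
  have hgd := Nat.gcd_dvd_left d k
  rw [map_smul, smul_mul_assoc,
    divOp_Tor (Nat.div_ne_zero_of_dvd hδ hd) (Nat.div_ne_zero_of_dvd hd0 hgd),
    Nat.div_mul_div hd hgd,
    Tor_mul_Tor (Nat.div_ne_zero_of_dvd hδ hgδ) (Nat.div_ne_zero_of_dvd hδ hd),
    Nat.lcm_div_div hδ hgδ hd, Nat.gcd_right_comm, Nat.gcd_eq_right hd]

theorem sigmaRef_mul_Tor (m a : ℕ) (hδ : δ ≠ 0) :
    sigmaRef r δ m a * Tor r (δ / Nat.gcd a δ) = sigmaRef r δ m a := by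
  rw [sigmaRef, sum_mul]
  refine sum_congr rfl fun k hk => ?_
  have hgk := Nat.gcd_dvd_left δ k
  have hga := Nat.gcd_dvd_right a δ
  have hgk_dvd_ga : Nat.gcd δ k ∣ Nat.gcd a δ :=
    Nat.dvd_gcd ((Nat.gcd_dvd_right δ k).trans (Nat.dvd_of_mem_divisors hk)) hgk
  rw [smul_mul_assoc,
    Tor_mul_Tor (Nat.div_ne_zero_of_dvd hδ hgk) (Nat.div_ne_zero_of_dvd hδ hga),
    Nat.lcm_div_div hδ hgk hga, Nat.gcd_eq_left hgk_dvd_ga]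

end SigmaRef

theorem statement4_general (r : ℕ) (δ a m d : ℕ)
    (hδ : 1 ≤ δ) (hd : d ∣ δ) :
    divOp r (δ / d) (sigmaRef r d m a) = sigmaRef r δ m a * Tor r (δ / d) ∧
    sigmaRef r δ m a * Tor r (δ / Nat.gcd a δ) = sigmaRef r δ m a ∧
    sigmaRef r δ m a = divOp r (δ / Nat.gcd δ a) (sigmaRef r (Nat.gcd δ a) m a) := by
  have hδ0 : δ ≠ 0 := Nat.one_le_iff_ne_zero.1 hδ
  refine ⟨divOp_sigmaRef m a hδ0 hd, sigmaRef_mul_Tor m a hδ0, ?_⟩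
  rw [divOp_sigmaRef m a hδ0 (Nat.gcd_dvd_left δ a), Nat.gcd_comm δ a, sigmaRef_mul_Tor m a hδ0]

/-- For `d ∣ δ`: (1) `d_{1/(δ/d)}(σ^d_m(a)) = σ^δ_m(a) · T_{δ/d}`;
(2) `σ^δ_m(a) · T_{δ/gcd(a,δ)} = σ^δ_m(a)`;
(3) `σ^δ_m(a) = d_{1/(δ/gcd(δ,a))}(σ^{gcd(δ,a)}_m(a))`. -/
theorem statement4 (r : ℕ) (hr : 1 ≤ r) (δ a m d : ℕ)
    (hδ : 1 ≤ δ) (ha : 1 ≤ a) (hd : d ∣ δ) :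
    divOp r (δ / d) (sigmaRef r d m a) = sigmaRef r δ m a * Tor r (δ / d) ∧
    sigmaRef r δ m a * Tor r (δ / Nat.gcd a δ) = sigmaRef r δ m a ∧
    sigmaRef r δ m a = divOp r (δ / Nat.gcd δ a) (sigmaRef r (Nat.gcd δ a) m a) :=
  statement4_general r δ a m d hδ hd

end
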